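/- arXiv:2107.09790 — 5 statements merged into one kernel-verified Lean document; each statement's English description precedes it below -/
import Mathlib

section
/- Let d ≥ 2 and let p, q, h be positive integers with p ≥ qd and h ≥ 2; set k := p/q, b := h^{q(d−1)}, t := h^{p−dq}, and let γ^{(p,q,h)} := ⟨b, tb, tb, …, tb, b⟩ (with b − 2 copies of tb). Then for every ε > 0 there exists h_0 ∈ ℕ such that for all h ≥ h_0: (1) |k^{(d)}(γ^{(p,q,h)}) − k| < ε, and (2) |k^{(d−1)}(γ^{(p,q,h)}) − s(d,k)| < ε. -/
noncomputable section
open Classical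

/-! ### Graph-metric notions -/

/-- The graph ball of radius `R` (an integer) around `x` in the path metric. -/
def gBall {V : Type*} (G : SimpleGraph V) (x : V) (R : ℕ) : Set V :=
  {y | G.dist x y ≤ R}

/-- The graph ball of real radius `r` around `x` in the path metric. -/
def gBallReal {V : Type*} (G : SimpleGraph V) (x : V) (r : ℝ) : Set V :=
  {y | (G.dist x y : ℝ) ≤ r}

/-- The graph sphere of radius `R` around `x` in the path metric. -/
def gSphere {V : Type*} (G : SimpleGraph V) (x : V) (R : ℕ) : Set V :=
  {y | G.dist x y = R}

/-- The diameter (in the path metric) of a set `S` of vertices, as a real number. -/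
def graphSetDiam {V : Type*} (G : SimpleGraph V) (S : Set V) : ℝ :=
  sSup {r : ℝ | ∃ x ∈ S, ∃ y ∈ S, r = (G.dist x y : ℝ)}

/-- `G` contains (at least) `n` pairwise vertex-disjoint paths, each with one endpoint
in `S` and the other endpoint in `T`. -/
def HasDisjointPathsBetween {V : Type*} (G : SimpleGraph V) (S T : Set V) (n : ℕ) : Prop :=
  ∃ (u v : Fin n → V) (p : ∀ i, G.Walk (u i) (v i)),
    (∀ i, (p i).IsPath) ∧ (∀ i, u i ∈ S) ∧ (∀ i, v i ∈ T) ∧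
    ∀ i j, i ≠ j → List.Disjoint (p i).support (p j).support

/-! ### Subdivisions -/

/-- The `m`-subdivision of a graph `G`: every edge is replaced by a path with `m` edges,
introducing `m - 1` new internal vertices on each edge. -/
def Subdivision {V : Type*} (G : SimpleGraph V) (m : ℕ) :
    SimpleGraph (V ⊕ (G.edgeSet × Fin (m - 1))) :=
  SimpleGraph.fromRel fun x y =>
    match x, y with
    | Sum.inl a, Sum.inl b => m = 1 ∧ G.Adj a b
    | Sum.inl a, Sum.inr (e, k) =>
        (k.val = 0 ∧ a = (Quot.out (e : Sym2 V)).1) ∨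
        (k.val = m - 2 ∧ a = (Quot.out (e : Sym2 V)).2)
    | Sum.inr (e, k), Sum.inr (e', k') => e = e' ∧ k'.val = k.val + 1
    | Sum.inr _, Sum.inl _ => False

/-! ### Sphere packings -/

/-- A packing of balls in `ℝ^d`, indexed by `ι`: closed balls with positive radii and
pairwise disjoint interiors. -/
structure BallPacking (d : ℕ) (ι : Type) where
  center : ι → EuclideanSpace ℝ (Fin d)
  radius : ι → ℝ
  radius_pos : ∀ i, 0 < radius i
  interior_disjoint : Pairwise fun i j =>
    Disjoint (Metric.ball (center i) (radius i)) (Metric.ball (center j) (radius j))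

/-- The closed ball with index `i` in the packing. -/
def BallPacking.cball {d : ℕ} {ι : Type} (P : BallPacking d ι) (i : ι) :
    Set (EuclideanSpace ℝ (Fin d)) :=
  Metric.closedBall (P.center i) (P.radius i)

/-- The tangency graph of a ball packing: two balls are adjacent when they intersect
in exactly one point. -/
def BallPacking.tangencyGraph {d : ℕ} {ι : Type} (P : BallPacking d ι) : SimpleGraph ι where
  Adj i j := i ≠ j ∧ ∃ p, P.cball i ∩ P.cball j = {p}
  symm := ⟨by
    rintro i j ⟨hij, p, hp⟩
    exact ⟨hij.symm, p, by rwa [Set.inter_comm]⟩⟩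
  loopless := ⟨fun i h => h.1 rfl⟩

/-- `G` is `M`-uniformly sphere-packed in `ℝ^d`: `G` is isomorphic to the tangency graph of
a packing of interior-disjoint closed balls in which the ratio of radii of any two
tangent balls lies in `[1/M, M]`. -/
def IsUniformlySpherePacked (d : ℕ) (M : ℝ) {V : Type*} (G : SimpleGraph V) : Prop :=
  ∃ (ι : Type) (P : BallPacking d ι), Nonempty (G ≃g P.tangencyGraph) ∧
    ∀ i j, P.tangencyGraph.Adj i j → P.radius i / P.radius j ∈ Set.Icc M⁻¹ M

/-! ### Tiles and tilings -/

/-- An axis-parallel closed hyperrectangle in `ℝ^d`, recorded by its lower and upper corners. -/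
structure Tile (d : ℕ) where
  lower : Fin d → ℝ
  upper : Fin d → ℝ

/-- The subset of `ℝ^d` occupied by a tile. -/
def Tile.toSet {d : ℕ} (A : Tile d) : Set (EuclideanSpace ℝ (Fin d)) :=
  {x | ∀ i, x i ∈ Set.Icc (A.lower i) (A.upper i)}

/-- The (open) interior of a tile. -/
def Tile.inner {d : ℕ} (A : Tile d) : Set (EuclideanSpace ℝ (Fin d)) :=
  {x | ∀ i, x i ∈ Set.Ioo (A.lower i) (A.upper i)}

/-- The side length of a tile along the `i`-th axis. -/
def Tile.len {d : ℕ} (A : Tile d) (i : Fin d) : ℝ := A.upper i - A.lower i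

/-- Two tiles intersect in a set of nonzero `(d-1)`-dimensional volume: there is exactly one
coordinate in which their ranges meet in a single point, while in all other coordinates
their ranges overlap in a nondegenerate interval. -/
def Tile.Tangent {d : ℕ} (A B : Tile d) : Prop :=
  ∃ i, max (A.lower i) (B.lower i) = min (A.upper i) (B.upper i) ∧
    ∀ j, j ≠ i → max (A.lower j) (B.lower j) < min (A.upper j) (B.upper j)

/-- The tangency graph of a collection of tiles: an edge between distinct tiles whose
intersection has nonzero `(d-1)`-dimensional volume. -/
def tangencyGraph {d : ℕ} (T : Set (Tile d)) : SimpleGraph T where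
  Adj A B := A ≠ B ∧ (Tile.Tangent A.1 B.1 ∨ Tile.Tangent B.1 A.1)
  symm := ⟨by rintro A B ⟨h1, h2⟩; exact ⟨h1.symm, h2.symm⟩⟩
  loopless := ⟨fun A h => h.1 rfl⟩

/-- The unit cube `[0,1]^d`. -/
def unitCube (d : ℕ) : Set (EuclideanSpace ℝ (Fin d)) :=
  {x | ∀ i, x i ∈ Set.Icc (0:ℝ) 1}

/-- `T` is a tiling of the unit cube `[0,1]^d`: a finite collection of nondegenerate tiles with
pairwise disjoint interiors whose union is `[0,1]^d`. -/
def IsUnitTiling (d : ℕ) (T : Set (Tile d)) : Prop :=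
  T.Finite ∧ (∀ A ∈ T, ∀ i, A.lower i < A.upper i) ∧
    (T.Pairwise fun A B => Disjoint A.inner B.inner) ∧
    (⋃ A ∈ T, A.toSet) = unitCube d

/-- The product of two tiles: a scaled copy of `B` placed inside `A`. -/
def tileProd {d : ℕ} (A B : Tile d) : Tile d where
  lower := fun i => A.lower i + B.lower i * A.len i
  upper := fun i => A.lower i + B.upper i * A.len i

/-- The tiling product `S ∘ T`: every tile of `S` is replaced by a scaled copy of `T`. -/
def tilingProd {d : ℕ} (S T : Set (Tile d)) : Set (Tile d) :=
  Set.image2 tileProd S T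

/-- The identity tiling, consisting of the single tile `[0,1]^d`. -/
def unitTile (d : ℕ) : Tile d := ⟨fun _ => 0, fun _ => 1⟩

/-- The `n`-fold iterated tiling product of `T` with itself. -/
def tilingPow {d : ℕ} (T : Set (Tile d)) : ℕ → Set (Tile d)
  | 0 => {unitTile d}
  | n + 1 => tilingProd T (tilingPow T n)

/-- The aspect ratio `α_T` of a tiling: the maximum of `ℓ_j(A)/ℓ_j(B)` over pairs of tiles
adjacent in the tangency graph (at least `1`; equal to `1` for a single tile). -/
def tilingAlpha {d : ℕ} (T : Set (Tile d)) : ℝ :=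
  sSup (insert 1 {r | ∃ A ∈ T, ∃ B ∈ T,
    (A ≠ B ∧ (Tile.Tangent A B ∨ Tile.Tangent B A)) ∧ ∃ j, r = A.len j / B.len j})

/-- `L_T`: the maximal side length appearing in the tiling `T`. -/
def tilingL {d : ℕ} (T : Set (Tile d)) : ℝ :=
  sSup {r | ∃ A ∈ T, ∃ i, r = A.len i}

/-! ### The tilings `T_γ^{(d)}` and related quantities -/

/-- The tensor product of two sequences: `γ ⊗ γ' = ⟨γ_1γ'_1, …, γ_1γ'_b, …, γ_aγ'_1, …, γ_aγ'_b⟩`. -/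
def tensorSeq (γ γ' : List ℕ) : List ℕ :=
  γ.flatMap fun g => γ'.map fun g' => g * g'

/-- The `n`-fold tensor power of the sequence `γ` (with `γ^{⊗0} = ⟨1⟩`). -/
def tensorPow (γ : List ℕ) : ℕ → List ℕ
  | 0 => [1]
  | n + 1 => tensorSeq γ (tensorPow γ n)

/-- One tile of the tiling `T_γ^{(d)}`: the cell at grid position `v` inside the `i`-th slab. -/
def seqTile (d : ℕ) (γ : List ℕ) (i : Fin γ.length) (v : Fin d → ℕ) : Tile d where
  lower := fun j => if j.val < d - 1 then (v j : ℝ) / (γ.get i : ℝ)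
    else (i.val : ℝ) / (γ.length : ℝ)
  upper := fun j => if j.val < d - 1 then ((v j : ℝ) + 1) / (γ.get i : ℝ)
    else ((i.val : ℝ) + 1) / (γ.length : ℝ)

/-- The tiling `T_γ^{(d)}` of `[0,1]^d`: for each `1 ≤ i ≤ b`, the slab
`[0,1]^{d-1} × [(i-1)/b, i/b]` is tiled by a `γ_i × ⋯ × γ_i` grid of translates of
`[0,1/γ_i]^{d-1} × [0,1/b]`. -/
def seqTiling (d : ℕ) (γ : List ℕ) : Set (Tile d) :=
  {A | ∃ (i : Fin γ.length) (v : Fin d → ℕ),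
    (∀ j : Fin d, (j.val < d - 1 → v j < γ.get i) ∧ (¬ j.val < d - 1 → v j = 0)) ∧
    A = seqTile d γ i v}

/-- `|γ|^{(d)} = γ_1^{d-1} + ⋯ + γ_b^{d-1}`, the number of tiles of `T_γ^{(d)}`. -/
def seqSize (d : ℕ) (γ : List ℕ) : ℕ := (γ.map fun g => g ^ (d - 1)).sum

/-- The growth exponent `k^{(d)}(γ) = log(|γ|^{(d)}) / log |γ|`. -/
def growthExp (d : ℕ) (γ : List ℕ) : ℝ :=
  Real.log (seqSize d γ) / Real.log (γ.length : ℝ)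

/-- The exponent `s(d,k) = d - 1 + (k - d)(1 - 1/(d-1))`. -/
def sdk (d : ℕ) (k : ℝ) : ℝ := (d : ℝ) - 1 + (k - (d : ℝ)) * (1 - 1 / ((d : ℝ) - 1))

/-- The sequence `γ^{(p,q,h)} = ⟨b, tb, …, tb, b⟩` with `b = h^{q(d-1)}`, `t = h^{p-dq}`,
and `b - 2` middle entries. -/
def gammaSeq (d p q h : ℕ) : List ℕ :=
  [h ^ (q * (d - 1))] ++
    List.replicate (h ^ (q * (d - 1)) - 2) (h ^ (p - d * q) * h ^ (q * (d - 1))) ++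
    [h ^ (q * (d - 1))]

/-! ### The infinite cube packing `Ŝ` and the graph `Ĝ_γ^{(d)}` -/

/-- The cube packing `Ŝ_n` in `ℝ^d`: for each `1 ≤ i ≤ b^n`, the slab
`[0,γ_1^n]^{d-1} × [h_{i-1}, h_i]` is tiled by a grid of cubes of side
`s_i = γ_1^n / (γ^{⊗n})_i`, where `h_i = s_1 + ⋯ + s_i`. -/
def hatTiles (d : ℕ) (γ : List ℕ) (n : ℕ) : Set (Tile d) :=
  {A | ∃ (i : Fin (tensorPow γ n).length) (v : Fin d → ℕ),
    (∀ j : Fin d, (j.val < d - 1 → v j < (tensorPow γ n).get i) ∧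
      (¬ j.val < d - 1 → v j = 0)) ∧
    A = { lower := fun j => if j.val < d - 1
            then (v j : ℝ) * (((γ.headI : ℝ) ^ n) / ((tensorPow γ n).get i : ℝ))
            else ((((tensorPow γ n).take i.val).map
              fun g => ((γ.headI : ℝ) ^ n) / (g : ℝ)).sum)
          upper := fun j => if j.val < d - 1
            then ((v j : ℝ) + 1) * (((γ.headI : ℝ) ^ n) / ((tensorPow γ n).get i : ℝ))
            else ((((tensorPow γ n).take i.val).map
              fun g => ((γ.headI : ℝ) ^ n) / (g : ℝ)).sum) +
              ((γ.headI : ℝ) ^ n) / ((tensorPow γ n).get i : ℝ) }}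

/-- The infinite nested cube packing `Ŝ = ⋃_n Ŝ_n`. -/
def hatTiling (d : ℕ) (γ : List ℕ) : Set (Tile d) := ⋃ n, hatTiles d γ n

/-- The infinite tangency graph `Ĝ_γ^{(d)}`. -/
def hatGraph (d : ℕ) (γ : List ℕ) : SimpleGraph (hatTiling d γ) :=
  tangencyGraph (hatTiling d γ)

/-! ### Projections -/

/-- The projection of a tile onto its last `d - 1` coordinates. -/
def projTile {d : ℕ} (A : Tile d) : Tile (d - 1) where
  lower := fun j => A.lower ⟨j.val + 1, by have := j.isLt; omega⟩
  upper := fun j => A.upper ⟨j.val + 1, by have := j.isLt; omega⟩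

/-! ### Cubes, facets and neat cube packings -/

/-- The facet of a tile in direction `i` (upper facet if `s = true`, lower if `s = false`). -/
def Tile.facet {d : ℕ} (A : Tile d) (i : Fin d) (s : Bool) :
    Set (EuclideanSpace ℝ (Fin d)) :=
  {x ∈ A.toSet | x i = if s then A.upper i else A.lower i}

/-- A tile is a (nondegenerate) cube when all its side lengths are equal and positive. -/
def Tile.IsCube {d : ℕ} (A : Tile d) : Prop :=
  (∀ i j, A.len i = A.len j) ∧ ∀ i, 0 < A.len i

/-- The side length of a cube. -/
def Tile.side {d : ℕ} (A : Tile d) : ℝ := sSup (Set.range A.len)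

/-- Two cubes are neatly tangent: they have disjoint interiors and, whenever they intersect
along `(d-1)`-dimensional faces `F_A ⊆ A` and `F_B ⊆ B`, either `F_A ⊆ A ∩ B` or
`F_B ⊆ A ∩ B`. -/
def NeatlyTangent {d : ℕ} (A B : Tile d) : Prop :=
  Disjoint A.inner B.inner ∧
    ∀ (i : Fin d) (sa sb : Bool),
      (Tile.Tangent A B ∨ Tile.Tangent B A) →
      A.toSet ∩ B.toSet ⊆ A.facet i sa ∩ B.facet i sb →
      (A.facet i sa ⊆ A.toSet ∩ B.toSet ∨ B.facet i sb ⊆ A.toSet ∩ B.toSet)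

/-- A neat cube packing: a collection of closed axis-parallel cubes, every two of which are
either neatly tangent or disjoint. -/
def IsNeatCubePacking {d : ℕ} (C : Set (Tile d)) : Prop :=
  (∀ A ∈ C, A.IsCube) ∧
    C.Pairwise fun A B => NeatlyTangent A B ∨ Disjoint A.toSet B.toSet

/-- `G` admits an `α`-uniform neat cube packing in `ℝ^d`: `G` is isomorphic to the tangency
graph of a neat cube packing of aspect ratio at most `α`. -/
def AdmitsNeatCubePacking (d : ℕ) (α : ℝ) {V : Type*} (G : SimpleGraph V) : Prop :=
  ∃ C : Set (Tile d), IsNeatCubePacking C ∧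
    (∀ A ∈ C, ∀ B ∈ C, (A.toSet ∩ B.toSet).Nonempty → A.side ≤ α * B.side) ∧
    Nonempty (G ≃g tangencyGraph C)

/-- The cube `[a_1, a_1 + ℓ] × ⋯ × [a_d, a_d + ℓ]`, as a tile. -/
def cubeTile (d : ℕ) (a : EuclideanSpace ℝ (Fin d)) (ℓ : ℝ) : Tile d :=
  ⟨fun i => a i, fun i => a i + ℓ⟩

/-- `∂_ε C` for the cube `C` with corner `a` and side `ℓ`: the boundary points `x` such that
exactly `2d - 1` of the `2d` facets `F` of `C` satisfy `dist(x, F) > εℓ`. -/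
def bdryEps (d : ℕ) (a : EuclideanSpace ℝ (Fin d)) (ℓ ε : ℝ) :
    Set (EuclideanSpace ℝ (Fin d)) :=
  {x ∈ frontier (cubeTile d a ℓ).toSet |
    {p : Fin d × Bool | ε * ℓ < Metric.infDist x ((cubeTile d a ℓ).facet p.1 p.2)}.ncard
      = 2 * d - 1}

/-- The star graph with center `none` and leaves `some i`. -/
def starGraph (ι : Type) : SimpleGraph (Option ι) where
  Adj x y := (x = none ∧ y ≠ none) ∨ (y = none ∧ x ≠ none)
  symm := ⟨by rintro x y (⟨h1, h2⟩ | ⟨h1, h2⟩) <;> [exact Or.inr ⟨h1, h2⟩; exact Or.inl ⟨h1, h2⟩]⟩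
  loopless := ⟨by rintro x (⟨h1, h2⟩ | ⟨h1, h2⟩) <;> exact h2 h1⟩

/-! With `b = h^{q(d-1)}` and `t = h^{p-dq}`, the size `|γ|^{(e)} = 2b^{e-1} + (b-2)(tb)^{e-1}`
lies between `b(tb)^{e-1}/2` and `b(tb)^{e-1}`, so its logarithm is
`(e q(d-1) + (e-1)(p-dq)) log h` up to an error of at most `log 2`. Dividing by
`log |γ| = q(d-1) log h`, the exponent `k^{(e)}` is within `log 2 / log h` of
`e + (e-1)(k-d)/(d-1)`, which equals `k` for `e = d` and `s(d,k)` for `e = d-1`. -/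

lemma length_gammaSeq {d p q h : ℕ} (hb : 2 ≤ h ^ (q * (d - 1))) :
    (gammaSeq d p q h).length = h ^ (q * (d - 1)) := by
  simp only [gammaSeq, List.length_append, List.length_singleton, List.length_replicate]
  omega

lemma seqSize_succ_gammaSeq (n d p q h : ℕ) :
    seqSize (n + 1) (gammaSeq d p q h) = 2 * (h ^ (q * (d - 1))) ^ n +
      (h ^ (q * (d - 1)) - 2) * (h ^ (p - d * q) * h ^ (q * (d - 1))) ^ n := by
  simp only [seqSize, add_tsub_cancel_right, gammaSeq, List.cons_append, List.nil_append,
    List.map_cons, List.map_append, List.map_replicate, List.map_nil, List.sum_cons,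
    List.sum_append, List.sum_replicate, smul_eq_mul, List.sum_nil, add_zero]
  ring

lemma growthExp_succ_gammaSeq (n d p q h : ℕ) (hb : 2 ≤ h ^ (q * (d - 1))) :
    growthExp (n + 1) (gammaSeq d p q h) =
      Real.log (2 * ((h : ℝ) ^ (q * (d - 1))) ^ n + ((h : ℝ) ^ (q * (d - 1)) - 2) *
        ((h : ℝ) ^ (p - d * q) * (h : ℝ) ^ (q * (d - 1))) ^ n) /
        (((q * (d - 1) : ℕ) : ℝ) * Real.log h) := by
  rw [growthExp, seqSize_succ_gammaSeq, length_gammaSeq hb, Nat.cast_pow, Real.log_pow]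
  push_cast [Nat.cast_sub hb]
  rfl

lemma two_mul_pow_add_mem_Icc (n : ℕ) {B T : ℝ} (hB : 4 ≤ B) (hT : 1 ≤ T) :
    2 * B ^ n + (B - 2) * (T * B) ^ n ∈ Set.Icc (B * (T * B) ^ n / 2) (B * (T * B) ^ n) := by
  have hBn : B ^ n ≤ (T * B) ^ n :=
    pow_le_pow_left₀ (by linarith) (le_mul_of_one_le_left (by linarith) hT) n
  have hTBn : 0 ≤ B ^ n := pow_nonneg (by linarith) n
  constructor <;> nlinarith

lemma abs_log_sub_log_le_log_two {x y : ℝ} (hy : y ∈ Set.Icc (x / 2) x) (hx : 0 < x) :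
    |Real.log y - Real.log x| ≤ Real.log 2 := by
  have hlow : Real.log (x / 2) ≤ Real.log y := Real.log_le_log (by positivity) hy.1
  have hup : Real.log y ≤ Real.log x := Real.log_le_log (by linarith [hy.1]) hy.2
  rw [Real.log_div hx.ne' two_ne_zero] at hlow
  rw [abs_le]
  constructor <;> linarith [Real.log_nonneg one_le_two]

lemma abs_log_two_mul_pow_add_sub_le (n a c : ℕ) {x : ℝ} (hx : 1 ≤ x) (hxa : 4 ≤ x ^ a) :
    |Real.log (2 * (x ^ a) ^ n + (x ^ a - 2) * (x ^ c * x ^ a) ^ n)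
      - ((n + 1) * a + n * c) * Real.log x| ≤ Real.log 2 := by
  have hx0 : 0 < x := by linarith
  have hlog : Real.log (x ^ a * (x ^ c * x ^ a) ^ n) = ((n + 1) * a + n * c) * Real.log x := by
    rw [← pow_add, ← pow_mul, ← pow_add, Real.log_pow]
    push_cast
    ring
  rw [← hlog]
  exact abs_log_sub_log_le_log_two
    (two_mul_pow_add_mem_Icc n hxa (one_le_pow₀ hx)) (by positivity)

lemma abs_growthExp_gammaSeq_sub_le {e d p q h : ℕ} (he : 1 ≤ e) (hd : 2 ≤ d) (hq : 0 < q)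
    (hpq : q * d ≤ p) (hh : 4 ≤ h) :
    |growthExp e (gammaSeq d p q h) - (e + (e - 1) * ((p / q : ℝ) - d) / (d - 1))|
      ≤ Real.log 2 / Real.log h := by
  obtain ⟨n, rfl⟩ : ∃ n, e = n + 1 := ⟨e - 1, by omega⟩
  have ha : 1 ≤ q * (d - 1) := Nat.mul_pos hq (by omega)
  have hb : 4 ≤ h ^ (q * (d - 1)) := hh.trans (Nat.le_self_pow (by omega) h)
  have hlogh : 0 < Real.log h := Real.log_pos (by exact_mod_cast (by omega : 1 < h))
  have hlim : ((n + 1 : ℕ) + ((n + 1 : ℕ) - 1) * ((p / q : ℝ) - d) / (d - 1) : ℝ) =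
      ((n + 1) * (q * (d - 1) : ℕ) + n * (p - d * q : ℕ)) * Real.log h /
        (((q * (d - 1) : ℕ) : ℝ) * Real.log h) := by
    have hd1 : (d : ℝ) - 1 ≠ 0 := sub_ne_zero.2 (by exact_mod_cast (by omega : d ≠ 1))
    rw [Nat.cast_sub (by linarith [Nat.mul_comm d q]), Nat.cast_mul,
      Nat.cast_sub (by omega : 1 ≤ d)]
    push_cast
    field_simp
    ring
  have herr := abs_log_two_mul_pow_add_sub_le n (q * (d - 1)) (p - d * q) (x := h)
    (by exact_mod_cast (by omega : 1 ≤ h)) (by exact_mod_cast hb)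
  rw [growthExp_succ_gammaSeq n d p q h (by omega), hlim, ← sub_div, abs_div,
    abs_of_pos (mul_pos (by exact_mod_cast ha) hlogh)]
  calc _ ≤ Real.log 2 / (((q * (d - 1) : ℕ) : ℝ) * Real.log h) := by gcongr
    _ ≤ Real.log 2 / Real.log h := by
      gcongr
      exact le_mul_of_one_le_left hlogh.le (by exact_mod_cast ha)

lemma tendsto_log_two_div_log_natCast :
    Filter.Tendsto (fun h : ℕ => Real.log 2 / Real.log h) Filter.atTop (nhds 0) := by
  simpa [div_eq_mul_inv] using
    (Real.tendsto_log_atTop.comp tendsto_natCast_atTop_atTop).inv_tendsto_atTop.const_mul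
      (Real.log 2)

theorem degree_limit_general (d p q : ℕ) (hd : 2 ≤ d) (hq : 0 < q) (hpq : q * d ≤ p)
    (ε : ℝ) (hε : 0 < ε) :
    ∃ h₀ : ℕ, ∀ h : ℕ, h₀ ≤ h → 2 ≤ h →
      |growthExp d (gammaSeq d p q h) - (p : ℝ) / (q : ℝ)| < ε ∧
      |growthExp (d - 1) (gammaSeq d p q h) - sdk d ((p : ℝ) / (q : ℝ))| < ε := by
  obtain ⟨h₀, hh₀⟩ := Filter.eventually_atTop.1 ((Filter.eventually_ge_atTop 4).and
    (tendsto_log_two_div_log_natCast.eventually (gt_mem_nhds hε)))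
  refine ⟨h₀, fun h hh _ => ?_⟩
  obtain ⟨hh4, hsmall⟩ := hh₀ h hh
  have hd1 : (d : ℝ) - 1 ≠ 0 := sub_ne_zero.2 (by exact_mod_cast (by omega : d ≠ 1))
  constructor
  · have hk := abs_growthExp_gammaSeq_sub_le (e := d) (by omega) hd hq hpq hh4
    have hlim : (d + (d - 1) * ((p / q : ℝ) - d) / (d - 1) : ℝ) = p / q := by
      field_simp
      ring
    rw [hlim] at hk
    exact hk.trans_lt hsmall
  · have hk := abs_growthExp_gammaSeq_sub_le (e := d - 1) (by omega) hd hq hpq hh4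
    have hlim : (((d - 1 : ℕ) : ℝ) + ((d - 1 : ℕ) - 1) * ((p / q : ℝ) - d) / (d - 1) : ℝ)
        = sdk d (p / q) := by
      rw [Nat.cast_sub (by omega), sdk]
      field_simp
      ring
    rw [hlim] at hk
    exact hk.trans_lt hsmall

/-- **Limiting exponents** (Lemma 2.7). With `k = p/q`, for all large `h` the sequence
`γ^{(p,q,h)}` satisfies `k^{(d)}(γ^{(p,q,h)}) ≈ k` and `k^{(d-1)}(γ^{(p,q,h)}) ≈ s(d,k)`. -/
theorem degree_limit (d p q : ℕ) (hd : 2 ≤ d) (hp : 0 < p) (hq : 0 < q) (hpq : q * d ≤ p)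
    (ε : ℝ) (hε : 0 < ε) :
    ∃ h₀ : ℕ, ∀ h : ℕ, h₀ ≤ h → 2 ≤ h →
      |growthExp d (gammaSeq d p q h) - (p : ℝ) / (q : ℝ)| < ε ∧
      |growthExp (d - 1) (gammaSeq d p q h) - sdk d ((p : ℝ) / (q : ℝ))| < ε :=
  degree_limit_general d p q hd hq hpq ε hε

end
end

section
/- Let d ≥ 2 and let S, T be tilings of [0,1]^d whose tangency graphs are connected, and let G = G(S∘T). Then for every tile X ∈ S∘T, the ball of radius diam(G(T)) around X in G contains at least |T| tiles: |B_G(X, diam(G(T)))| ≥ |T|. -/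
noncomputable section
open Classical

/-!
Inside a tile `A` of `S`, the tiles of `S ∘ T` form a copy of `T` rescaled by the coordinatewise
strictly increasing affine maps `x ↦ a_i + x ℓ_i(A)`. These maps preserve the equalities and
strict inequalities between endpoints that define tangency, so `B ↦ A ∘ B` is an injective graph
homomorphism `G(T) → G(S ∘ T)`. Graph homomorphisms do not increase distances, hence the whole
copy of `T` containing `X` lies in the ball of radius `diam G(T)` around `X`.
-/

namespace Tile

variable {d : ℕ}

lemma strictMono_tileProd_coord {A : Tile d} {i : Fin d} (hA : 0 < A.len i) :
    StrictMono fun x => A.lower i + x * A.len i :=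
  (strictMono_mul_right_of_pos hA).const_add _

lemma tileProd_injective {A : Tile d} (hA : ∀ i, 0 < A.len i) :
    Function.Injective (tileProd A) := by
  rintro ⟨l, u⟩ ⟨l', u'⟩ h
  have hl : ∀ i, A.lower i + l i * A.len i = A.lower i + l' i * A.len i :=
    fun i => congrFun (congrArg Tile.lower h) i
  have hu : ∀ i, A.lower i + u i * A.len i = A.lower i + u' i * A.len i :=
    fun i => congrFun (congrArg Tile.upper h) i
  simp only [Tile.mk.injEq]
  exact ⟨funext fun i => (strictMono_tileProd_coord (hA i)).injective (hl i),
    funext fun i => (strictMono_tileProd_coord (hA i)).injective (hu i)⟩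

lemma Tangent.tileProd {A B B' : Tile d} (hA : ∀ i, 0 < A.len i) (h : B.Tangent B') :
    (tileProd A B).Tangent (tileProd A B') := by
  obtain ⟨i, hi, hne⟩ := h
  have hf := fun j => strictMono_tileProd_coord (hA j)
  refine ⟨i, ?_, fun j hj => ?_⟩
  · change max (_ + _) (_ + _) = min (_ + _) (_ + _)
    rw [← (hf i).monotone.map_max, ← (hf i).monotone.map_min, hi]
  · change max (_ + _) (_ + _) < min (_ + _) (_ + _)
    rw [← (hf j).monotone.map_max, ← (hf j).monotone.map_min]
    exact hf j (hne j hj)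

end Tile

section TileProdHom

variable {d : ℕ} {S T : Set (Tile d)} {A : Tile d}

def tileProdHom (hA : A ∈ S) (hApos : ∀ i, 0 < A.len i) :
    tangencyGraph T →g tangencyGraph (tilingProd S T) where
  toFun B := ⟨tileProd A B, Set.mem_image2_of_mem hA B.2⟩
  map_rel' := fun ⟨hne, htan⟩ =>
    ⟨fun h => hne (Subtype.ext (Tile.tileProd_injective hApos (congrArg Subtype.val h))),
      htan.imp (Tile.Tangent.tileProd hApos) (Tile.Tangent.tileProd hApos)⟩

lemma tileProdHom_injective (hA : A ∈ S) (hApos : ∀ i, 0 < A.len i) :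
    Function.Injective (tileProdHom (T := T) hA hApos) :=
  fun _ _ h => Subtype.ext (Tile.tileProd_injective hApos (congrArg Subtype.val h))

end TileProdHom

namespace SimpleGraph

variable {V W : Type*} {G : SimpleGraph V} {G' : SimpleGraph W}

lemma Hom.dist_le (f : G →g G') {u v : V} (h : G.Reachable u v) :
    G'.dist (f u) (f v) ≤ G.dist u v := by
  obtain ⟨p, hp⟩ := h.exists_walk_length_eq_dist
  calc G'.dist (f u) (f v) ≤ (p.map f).length := SimpleGraph.dist_le _
    _ = G.dist u v := by rw [Walk.length_map, hp]

lemma Hom.range_subset_gBall [Finite V] (f : G →g G') (hG : G.Connected) (x : V) :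
    Set.range f ⊆ gBall G' (f x) G.diam := by
  rintro _ ⟨y, rfl⟩
  have : Nonempty V := hG.nonempty
  exact (f.dist_le (hG x y)).trans (dist_le_diam (connected_iff_ediam_ne_top.mp hG))

lemma Hom.card_le_ncard_gBall [Finite W] (f : G →g G') (hf : Function.Injective f)
    (hG : G.Connected) (x : V) : Nat.card V ≤ (gBall G' (f x) G.diam).ncard := by
  have : Finite V := Finite.of_injective f hf
  calc Nat.card V = (Set.range f).ncard := (Set.ncard_range_of_injective hf).symm
    _ ≤ _ := Set.ncard_le_ncard (f.range_subset_gBall hG x) (Set.toFinite _)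

end SimpleGraph

theorem contract_growth_lower_bound_general (d : ℕ) (S T : Set (Tile d))
    (hS : IsUnitTiling d S) (hT : IsUnitTiling d T)
    (hTc : (tangencyGraph T).Connected)
    (X : (tilingProd S T)) :
    T.ncard ≤ (gBall (tangencyGraph (tilingProd S T)) X ((tangencyGraph T).diam)).ncard := by
  obtain ⟨A, hA, B, hB, hX⟩ := X.2
  have : Finite (tilingProd S T) := hS.1.image2 _ hT.1
  have hApos : ∀ i, 0 < A.len i := fun i => sub_pos.mpr (hS.2.1 A hA i)
  have hXB : X = tileProdHom hA hApos ⟨B, hB⟩ := Subtype.ext hX.symm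
  rw [hXB, ← Nat.card_coe_set_eq]
  exact (tileProdHom hA hApos).card_le_ncard_gBall (tileProdHom_injective hA hApos) hTc _

/-- (Lemma 3.1). For tilings `S, T` of `[0,1]^d` with connected tangency graphs and
`G = G(S∘T)`, every `X ∈ S∘T` satisfies `|B_G(X, diam G(T))| ≥ |T|`. -/
theorem contract_growth_lower_bound (d : ℕ) (hd : 2 ≤ d) (S T : Set (Tile d))
    (hS : IsUnitTiling d S) (hT : IsUnitTiling d T)
    (hSc : (tangencyGraph S).Connected) (hTc : (tangencyGraph T).Connected)
    (X : (tilingProd S T)) :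
    T.ncard ≤ (gBall (tangencyGraph (tilingProd S T)) X ((tangencyGraph T).diam)).ncard :=
  contract_growth_lower_bound_general d S T hS hT hTc X

end
end

section
/- Let d ≥ 2 and let T be a tiling of [0,1]^d. Then every tile A ∈ T satisfies deg_{G(T)}(A) ≤ 3^d · α_T^{2d}, where deg_{G(T)}(A) is the degree of A in the tangency graph G(T). -/
noncomputable section
open Classical

/-!
Let `ℓ` be the side lengths of `A` and `α = α_T`. Every neighbour `B` of `A` has sides at least
`ℓ / α` and touches `A`, so it contains an open box with sides `ℓ / α` lying in the box `3A`
(the concentric enlargement of `A` with sides `3ℓ`). These boxes are disjoint because the tiles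
are, and comparing volumes gives `deg A · ∏ ℓ / α^d ≤ 3^d ∏ ℓ`, that is `deg A ≤ 3^d α^d`.
-/

namespace Tile

variable {d : ℕ}

theorem Tangent.symm {A B : Tile d} (h : A.Tangent B) : B.Tangent A := by
  obtain ⟨i, hi, hne⟩ := h
  exact ⟨i, by rw [max_comm, min_comm, hi], fun j hj => by rw [max_comm, min_comm]; exact hne j hj⟩

theorem Tangent.max_lower_le_min_upper {A B : Tile d} (h : A.Tangent B) (j : Fin d) :
    max (A.lower j) (B.lower j) ≤ min (A.upper j) (B.upper j) := by
  obtain ⟨i, hi, hne⟩ := h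
  by_cases hj : j = i
  · exact hj ▸ hi.le
  · exact (hne j hj).le

theorem inner_eq_preimage (A : Tile d) :
    A.inner = (MeasurableEquiv.toLp 2 (Fin d → ℝ)).symm ⁻¹'
      Set.univ.pi fun i => Set.Ioo (A.lower i) (A.upper i) := by
  ext x
  simp [Tile.inner]

theorem measurableSet_inner (A : Tile d) : MeasurableSet A.inner := by
  rw [inner_eq_preimage]
  exact (MeasurableEquiv.toLp 2 (Fin d → ℝ)).symm.measurable
    (MeasurableSet.univ_pi fun _ => measurableSet_Ioo)

theorem volume_inner (A : Tile d) :
    MeasureTheory.volume A.inner = ∏ i, ENNReal.ofReal (A.len i) := by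
  rw [inner_eq_preimage,
    (EuclideanSpace.volume_preserving_symm_measurableEquiv_toLp (Fin d)).measure_preimage
      (MeasurableSet.univ_pi fun _ => measurableSet_Ioo).nullMeasurableSet,
    MeasureTheory.volume_pi_pi]
  simp [Real.volume_Ioo, Tile.len]

theorem inner_subset_inner {A B : Tile d} (hl : ∀ i, B.lower i ≤ A.lower i)
    (hu : ∀ i, A.upper i ≤ B.upper i) : A.inner ⊆ B.inner :=
  fun _ hx i => ⟨(hl i).trans_lt (hx i).1, (hx i).2.trans_le (hu i)⟩

def triple (A : Tile d) : Tile d :=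
  ⟨fun i => A.lower i - A.len i, fun i => A.upper i + A.len i⟩

theorem len_triple (A : Tile d) (i : Fin d) : A.triple.len i = 3 * A.len i := by
  simp only [triple, Tile.len]
  ring

/-- The box with sides `A.len / α` placed inside `B` as close to `A` as possible. -/
def nearBox (A B : Tile d) (α : ℝ) : Tile d :=
  let c := fun i => min (max (A.lower i) (B.lower i)) (B.upper i - A.len i / α)
  ⟨c, fun i => c i + A.len i / α⟩

theorem len_nearBox (A B : Tile d) (α : ℝ) (i : Fin d) :
    (A.nearBox B α).len i = A.len i / α := by
  simp only [nearBox, Tile.len]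
  ring

theorem inner_nearBox_subset_inner {A B : Tile d} {α : ℝ} (hα : 0 < α)
    (hlen : ∀ i, A.len i ≤ α * B.len i) : (A.nearBox B α).inner ⊆ B.inner := by
  refine inner_subset_inner (fun i => le_min (le_max_right _ _) ?_) fun i => ?_
  all_goals
    have : A.len i / α ≤ B.len i := (div_le_iff₀' hα).2 (hlen i)
    simp only [nearBox, Tile.len] at this ⊢
  · linarith
  · linarith [min_le_right (max (A.lower i) (B.lower i)) (B.upper i - (A.upper i - A.lower i) / α)]

theorem inner_nearBox_subset_inner_triple {A B : Tile d} {α : ℝ} (hα : 1 ≤ α)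
    (hA : ∀ i, 0 ≤ A.len i)
    (hAB : ∀ i, max (A.lower i) (B.lower i) ≤ min (A.upper i) (B.upper i)) :
    (A.nearBox B α).inner ⊆ A.triple.inner := by
  refine inner_subset_inner (fun i => le_min ?_ ?_) fun i => ?_
  all_goals
    have hδ : A.len i / α ≤ A.len i := div_le_self (hA i) hα
    have hδ₀ : 0 ≤ A.len i / α := div_nonneg (hA i) (zero_le_one.trans hα)
    have hmax := hAB i
    simp only [nearBox, triple, Tile.len] at hδ hδ₀ hmax ⊢
  · linarith [le_max_left (A.lower i) (B.lower i)]
  · linarith [le_max_left (A.lower i) (B.lower i), min_le_right (A.upper i) (B.upper i)]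
  · linarith [min_le_left (max (A.lower i) (B.lower i)) (B.upper i - (A.upper i - A.lower i) / α),
      min_le_left (A.upper i) (B.upper i)]

end Tile

theorem card_mul_prod_le_prod_of_pairwiseDisjoint {d : ℕ} {ι : Type*} {s : Finset ι}
    {Q : ι → Tile d} {E : Tile d} {δ : Fin d → ℝ} (hQ : ∀ k ∈ s, ∀ j, (Q k).len j = δ j)
    (hδ : ∀ j, 0 ≤ δ j) (hE : ∀ j, 0 ≤ E.len j)
    (hdisj : (s : Set ι).PairwiseDisjoint fun k => (Q k).inner)
    (hsub : ∀ k ∈ s, (Q k).inner ⊆ E.inner) :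
    (s.card : ℝ) * ∏ j, δ j ≤ ∏ j, E.len j := by
  have hvol : (s.card : ENNReal) * ENNReal.ofReal (∏ j, δ j) ≤ ENNReal.ofReal (∏ j, E.len j) :=
    calc (s.card : ENNReal) * ENNReal.ofReal (∏ j, δ j)
        = ∑ k ∈ s, MeasureTheory.volume (Q k).inner := by
          rw [Finset.sum_congr rfl fun k hk => by rw [Tile.volume_inner, funext (hQ k hk)],
            Finset.sum_const, nsmul_eq_mul, ENNReal.ofReal_prod_of_nonneg fun j _ => hδ j]
      _ = MeasureTheory.volume (⋃ k ∈ s, (Q k).inner) :=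
          (MeasureTheory.measure_biUnion_finset hdisj fun k _ => (Q k).measurableSet_inner).symm
      _ ≤ MeasureTheory.volume E.inner := MeasureTheory.measure_mono (Set.iUnion₂_subset hsub)
      _ = ENNReal.ofReal (∏ j, E.len j) := by
          rw [Tile.volume_inner, ENNReal.ofReal_prod_of_nonneg fun j _ => hE j]
  rwa [← ENNReal.ofReal_natCast, ← ENNReal.ofReal_mul (by positivity),
    ENNReal.ofReal_le_ofReal_iff (Finset.prod_nonneg fun j _ => hE j)] at hvol

theorem ncard_neighborSet_le {d : ℕ} {T : Set (Tile d)} (hfin : T.Finite)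
    (hdisj : T.Pairwise fun A B => Disjoint A.inner B.inner) {A : T}
    (hA : ∀ i, A.1.lower i < A.1.upper i) {α : ℝ} (hα : 1 ≤ α)
    (hratio : ∀ B, (tangencyGraph T).Adj A B → ∀ j, A.1.len j ≤ α * B.1.len j) :
    (((tangencyGraph T).neighborSet A).ncard : ℝ) ≤ 3 ^ d * α ^ d := by
  have := hfin.fintype
  have hα₀ : 0 < α := zero_lt_one.trans_le hα
  have hℓ : ∀ j, 0 < A.1.len j := fun j => sub_pos.2 (hA j)
  have hpack := card_mul_prod_le_prod_of_pairwiseDisjoint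
    (s := ((tangencyGraph T).neighborSet A).toFinset) (Q := fun B => A.1.nearBox B.1 α)
    (E := A.1.triple) (δ := fun j => A.1.len j / α)
    (fun _ _ j => Tile.len_nearBox _ _ _ j) (fun j => (div_pos (hℓ j) hα₀).le)
    (fun j => by rw [Tile.len_triple]; exact mul_nonneg zero_le_three (hℓ j).le)
    (fun B hB C hC hBC => by
      simp only [Set.coe_toFinset, SimpleGraph.mem_neighborSet] at hB hC
      exact (hdisj B.2 C.2 (Subtype.coe_injective.ne hBC)).mono
        (Tile.inner_nearBox_subset_inner hα₀ (hratio B hB))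
        (Tile.inner_nearBox_subset_inner hα₀ (hratio C hC)))
    (fun B hB => by
      simp only [Set.mem_toFinset, SimpleGraph.mem_neighborSet] at hB
      have hAB : A.1.Tangent B.1 := hB.2.elim id Tile.Tangent.symm
      exact Tile.inner_nearBox_subset_inner_triple hα (fun j => (hℓ j).le)
        hAB.max_lower_le_min_upper)
  have hP : 0 < ∏ j, A.1.len j := Finset.prod_pos fun j _ => hℓ j
  simp only [Finset.prod_div_distrib, Tile.len_triple, Finset.prod_mul_distrib,
    Finset.prod_const, Finset.card_univ, Fintype.card_fin] at hpack
  rw [Set.ncard_eq_toFinset_card']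
  calc _ = (_ : ℝ) * ((∏ j, A.1.len j) / α ^ d) * α ^ d / ∏ j, A.1.len j := by
        field_simp
    _ ≤ 3 ^ d * (∏ j, A.1.len j) * α ^ d / ∏ j, A.1.len j := by gcongr
    _ = 3 ^ d * α ^ d := by field_simp

private theorem bddAbove_tilingAlpha_set {d : ℕ} {T : Set (Tile d)} (hfin : T.Finite) :
    BddAbove (insert 1 {r | ∃ A ∈ T, ∃ B ∈ T,
      (A ≠ B ∧ (Tile.Tangent A B ∨ Tile.Tangent B A)) ∧ ∃ j, r = A.len j / B.len j}) := by
  refine ((((hfin.prod (hfin.prod Set.finite_univ)).image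
    fun p : Tile d × Tile d × Fin d => p.1.len p.2.2 / p.2.1.len p.2.2).subset ?_).insert 1).bddAbove
  rintro r ⟨A, hA, B, hB, -, j, rfl⟩
  exact ⟨(A, B, j), ⟨hA, hB, trivial⟩, rfl⟩

theorem one_le_tilingAlpha {d : ℕ} {T : Set (Tile d)} (hfin : T.Finite) : 1 ≤ tilingAlpha T :=
  le_csSup (bddAbove_tilingAlpha_set hfin) (Set.mem_insert _ _)

theorem len_le_tilingAlpha_mul_len {d : ℕ} {T : Set (Tile d)} (hfin : T.Finite) {A B : Tile d}
    (hA : A ∈ T) (hB : B ∈ T) (hAB : A ≠ B ∧ (A.Tangent B ∨ B.Tangent A)) {j : Fin d}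
    (hBj : 0 < B.len j) : A.len j ≤ tilingAlpha T * B.len j :=
  (div_le_iff₀ hBj).1 <| le_csSup (bddAbove_tilingAlpha_set hfin)
    (Set.mem_insert_of_mem _ ⟨A, hA, B, hB, hAB, j, rfl⟩)

theorem tiling_degree_bound_general (d : ℕ) (T : Set (Tile d)) (hT : IsUnitTiling d T)
    (A : T) :
    (((tangencyGraph T).neighborSet A).ncard : ℝ) ≤ (3 : ℝ) ^ d * tilingAlpha T ^ (2 * d) := by
  obtain ⟨hfin, hpos, hdisj, -⟩ := hT
  have hα := one_le_tilingAlpha hfin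
  calc (((tangencyGraph T).neighborSet A).ncard : ℝ)
      ≤ 3 ^ d * tilingAlpha T ^ d :=
        ncard_neighborSet_le hfin hdisj (hpos A A.2) hα fun B hAB j =>
          len_le_tilingAlpha_mul_len hfin A.2 B.2 ⟨Subtype.coe_injective.ne hAB.1, hAB.2⟩
            (sub_pos.2 (hpos B B.2 j))
    _ ≤ 3 ^ d * tilingAlpha T ^ (2 * d) := by gcongr; omega

/-- **Degree bound** (Lemma 3.3). In a tiling `T` of `[0,1]^d`, every tile has degree at most
`3^d · α_T^{2d}` in the tangency graph. -/
theorem tiling_degree_bound (d : ℕ) (hd : 2 ≤ d) (T : Set (Tile d)) (hT : IsUnitTiling d T)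
    (A : T) :
    (((tangencyGraph T).neighborSet A).ncard : ℝ) ≤ (3 : ℝ) ^ d * tilingAlpha T ^ (2 * d) :=
  tiling_degree_bound_general d T hT A
end
end

section
/- Let d ≥ 2 and let γ = ⟨γ_1,…,γ_a⟩ and γ′ = ⟨γ′_1,…,γ′_{b}⟩ be sequences of positive integers with γ′_1 = γ′_{b}. Then α_{T^{(d)}_{γ⊗γ′}} ≤ max(α_{T^{(d)}_γ}, α_{T^{(d)}_{γ′}}). -/
noncomputable section
open Classical

/-!
Two tiles of `T_γ` can only touch inside one slab or across two consecutive slabs, so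
`α_{T_γ}` is the largest ratio between consecutive entries of `γ` (or `1`). Consecutive
entries of `γ ⊗ γ'` are `γ_i γ'_k, γ_i γ'_{k+1}`, whose ratio is one of `γ'`, or, at a
block boundary, `γ_i γ'_b, γ_{i+1} γ'_1`, whose ratio is one of `γ` precisely because
`γ'_1 = γ'_b`.
-/

def Tile.Adjacent {d : ℕ} (A B : Tile d) : Prop :=
  A ≠ B ∧ (A.Tangent B ∨ B.Tangent A)

theorem Tile.Adjacent.symm {d : ℕ} {A B : Tile d} (h : A.Adjacent B) : B.Adjacent A :=
  ⟨h.1.symm, h.2.symm⟩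

theorem Tile.Tangent.lower_le_upper {d : ℕ} {A B : Tile d} (h : A.Tangent B) (j : Fin d) :
    A.lower j ≤ B.upper j ∧ B.lower j ≤ A.upper j := by
  obtain ⟨i, heq, hlt⟩ := h
  have hle : max (A.lower j) (B.lower j) ≤ min (A.upper j) (B.upper j) := by
    by_cases hji : j = i
    · exact (hji ▸ heq).le
    · exact (hlt j hji).le
  exact ⟨(le_max_left _ _).trans (hle.trans (min_le_right _ _)),
    (le_max_right _ _).trans (hle.trans (min_le_left _ _))⟩

section TilingAlpha

variable {d : ℕ} {T : Set (Tile d)} {M : ℝ}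

theorem tilingAlpha_le_iff
    (hbdd : ∃ C, ∀ A ∈ T, ∀ B ∈ T, A.Adjacent B → ∀ j, A.len j / B.len j ≤ C) :
    tilingAlpha T ≤ M ↔
      1 ≤ M ∧ ∀ A ∈ T, ∀ B ∈ T, A.Adjacent B → ∀ j, A.len j / B.len j ≤ M := by
  obtain ⟨C, hC⟩ := hbdd
  have hbdd : BddAbove (insert 1 {r | ∃ A ∈ T, ∃ B ∈ T, A.Adjacent B ∧
      ∃ j, r = A.len j / B.len j}) := by
    refine ⟨max 1 C, ?_⟩
    rintro r (rfl | ⟨A, hA, B, hB, hAB, j, rfl⟩)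
    exacts [le_max_left _ _, (hC A hA B hB hAB j).trans (le_max_right _ _)]
  refine (csSup_le_iff hbdd (Set.insert_nonempty _ _)).trans ?_
  simp only [Set.forall_mem_insert, Set.mem_ofPred_eq]
  refine and_congr_right fun _ => ⟨?_, ?_⟩
  · exact fun h A hA B hB hAB j => h _ ⟨A, hA, B, hB, hAB, j, rfl⟩
  · rintro h r ⟨A, hA, B, hB, hAB, j, rfl⟩
    exact h A hA B hB hAB j

end TilingAlpha

def WithinRatio (M : ℝ) (a b : ℕ) : Prop :=
  (b : ℝ) ≤ M * a ∧ (a : ℝ) ≤ M * b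

theorem WithinRatio.mul_left {M : ℝ} {a b : ℕ} (h : WithinRatio M a b) (c : ℕ) :
    WithinRatio M (c * a) (c * b) := by
  have hc : (0 : ℝ) ≤ c := c.cast_nonneg
  constructor <;> push_cast <;> nlinarith [h.1, h.2]

theorem tensorSeq_cons (g : ℕ) (γ γ' : List ℕ) :
    tensorSeq (g :: γ) γ' = γ'.map (g * ·) ++ tensorSeq γ γ' :=
  List.flatMap_cons

theorem isChain_tensorSeq {R : ℕ → ℕ → Prop} (hR : ∀ c a b, R a b → R (c * a) (c * b))
    {γ γ' : List ℕ} (hγ : γ.IsChain R) (hγ' : γ'.IsChain R)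
    (hfl : γ'.head? = γ'.getLast?) : (tensorSeq γ γ').IsChain R := by
  induction γ with
  | nil => exact .nil
  | cons g γ ih =>
    rw [tensorSeq_cons]
    refine .append (List.isChain_map_of_isChain _ (hR g) hγ') (ih hγ.tail) ?_
    intro x hx y hy
    rw [List.getLast?_map, ← hfl] at hx
    obtain ⟨c, hc, rfl⟩ := Option.mem_map.1 hx
    cases γ with
    | nil => simp [tensorSeq] at hy
    | cons g₂ γ =>
      rw [tensorSeq_cons, List.head?_append, List.head?_map, hc] at hy
      obtain rfl : g₂ * c = y := by simpa using hy
      simpa only [mul_comm] using hR c g g₂ (List.isChain_cons_cons.1 hγ).1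

section SeqTiling

variable {d : ℕ} {γ : List ℕ}

theorem seqTile_len (i : Fin γ.length) (v : Fin d → ℕ) (j : Fin d) :
    (seqTile d γ i v).len j =
      if j.val < d - 1 then (γ[i] : ℝ)⁻¹ else (γ.length : ℝ)⁻¹ := by
  simp only [Tile.len, seqTile, List.get_eq_getElem, Fin.getElem_fin]
  split_ifs <;> ring

theorem seqTile_len_div (i i' : Fin γ.length) (v v' : Fin d → ℕ) (j : Fin d) :
    (seqTile d γ i v).len j / (seqTile d γ i' v').len j =
      if j.val < d - 1 then (γ[i'] : ℝ) / γ[i] else 1 := by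
  rw [seqTile_len, seqTile_len]
  split_ifs
  · exact inv_div_inv _ _
  · exact div_self (inv_ne_zero (Nat.cast_ne_zero.2 (Fin.pos i).ne'))

theorem seqTile_slab_le_of_tangent {i i' : Fin γ.length} {v v' : Fin d → ℕ} (hd : 1 ≤ d)
    (h : (seqTile d γ i v).Tangent (seqTile d γ i' v')) :
    (i : ℕ) ≤ i' + 1 ∧ (i' : ℕ) ≤ i + 1 := by
  have hb : (0 : ℝ) < γ.length := Nat.cast_pos.2 (Fin.pos i)
  have := h.lower_le_upper ⟨d - 1, by omega⟩
  simp only [seqTile, lt_irrefl, if_false, div_le_div_iff_of_pos_right hb] at this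
  exact_mod_cast this

theorem seqTiling_len_div_le {M : ℝ} (hM : 1 ≤ M) (hγ : γ.IsChain (WithinRatio M)) :
    ∀ A ∈ seqTiling d γ, ∀ B ∈ seqTiling d γ, A.Adjacent B →
      ∀ j, A.len j / B.len j ≤ M := by
  rintro _ ⟨⟨i, hi⟩, v, -, rfl⟩ _ ⟨⟨i', hi'⟩, v', -, rfl⟩ ⟨-, htan⟩ j
  have hd : 1 ≤ d := Fin.pos j
  have hslab : i ≤ i' + 1 ∧ i' ≤ i + 1 := by
    rcases htan with h | h
    exacts [seqTile_slab_le_of_tangent hd h, (seqTile_slab_le_of_tangent hd h).symm]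
  rw [seqTile_len_div]
  split_ifs
  · obtain rfl | rfl | rfl : i' = i ∨ i' = i + 1 ∨ i = i' + 1 := by omega
    · exact (div_self_le_one _).trans hM
    · exact div_le_of_le_mul₀ (Nat.cast_nonneg _) (by linarith) (hγ.getElem i hi').1
    · exact div_le_of_le_mul₀ (Nat.cast_nonneg _) (by linarith) (hγ.getElem i' hi).2
  · exact hM

theorem seqTile_zero_mem (hpos : ∀ x ∈ γ, 0 < x) (i : Fin γ.length) :
    seqTile d γ i 0 ∈ seqTiling d γ :=
  ⟨i, 0, fun _ => ⟨fun _ => hpos _ (List.get_mem γ i), fun _ => rfl⟩, rfl⟩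

theorem seqTile_zero_adjacent_succ (hd : 2 ≤ d) (hpos : ∀ x ∈ γ, 0 < x) {k : ℕ}
    (hk : k + 1 < γ.length) :
    (seqTile d γ ⟨k, by omega⟩ 0).Adjacent (seqTile d γ ⟨k + 1, hk⟩ 0) := by
  have hb : (0 : ℝ) < γ.length := Nat.cast_pos.2 (by omega)
  let last : Fin d := ⟨d - 1, by omega⟩
  refine ⟨fun h => ?_, Or.inl ⟨last, ?_, fun j hj => ?_⟩⟩
  · have := congrArg (fun A : Tile d => A.lower last) h
    simp [last, seqTile, hb.ne'] at this
  · simp only [last, seqTile, lt_irrefl, if_false, Pi.zero_apply]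
    push_cast
    rw [max_eq_right (by gcongr; linarith), min_eq_left (by gcongr; linarith)]
  · have hj' : j.val < d - 1 := by
      have := j.isLt
      have : j.val ≠ d - 1 := fun h => hj (Fin.ext h)
      omega
    simpa [seqTile, hj'] using ⟨hpos _ (List.getElem_mem _), hpos _ (List.getElem_mem _)⟩

end SeqTiling

theorem tilingAlpha_seqTiling_le_iff {d : ℕ} (hd : 2 ≤ d) {γ : List ℕ}
    (hpos : ∀ x ∈ γ, 0 < x) {M : ℝ} :
    tilingAlpha (seqTiling d γ) ≤ M ↔ 1 ≤ M ∧ γ.IsChain (WithinRatio M) := by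
  have hbdd : γ.IsChain (WithinRatio (γ.sum + 1)) := by
    refine (List.pairwise_of_forall_mem_list fun a ha b hb => ?_).isChain
    have ha1 : (1 : ℝ) ≤ a := Nat.one_le_cast.2 (hpos a ha)
    have hb1 : (1 : ℝ) ≤ b := Nat.one_le_cast.2 (hpos b hb)
    have has : (a : ℝ) ≤ γ.sum := Nat.cast_le.2 (List.le_sum_of_mem ha)
    have hbs : (b : ℝ) ≤ γ.sum := Nat.cast_le.2 (List.le_sum_of_mem hb)
    constructor <;> nlinarith
  have hone : (1 : ℝ) ≤ γ.sum + 1 := le_add_of_nonneg_left (Nat.cast_nonneg _)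
  rw [tilingAlpha_le_iff ⟨_, seqTiling_len_div_le hone hbdd⟩]
  refine and_congr_right fun hM => ⟨fun h => List.isChain_iff_getElem.2 fun k hk => ?_,
    seqTiling_len_div_le hM⟩
  have hadj := seqTile_zero_adjacent_succ hd hpos hk
  have hA := seqTile_zero_mem (d := d) hpos ⟨k, by omega⟩
  have hB := seqTile_zero_mem (d := d) hpos ⟨k + 1, hk⟩
  have h0 : (0 : ℕ) < d - 1 := by omega
  have hup := h _ hA _ hB hadj ⟨0, by omega⟩
  have hdown := h _ hB _ hA hadj.symm ⟨0, by omega⟩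
  rw [seqTile_len_div, if_pos h0, div_le_iff₀ (by exact_mod_cast hpos _ (List.getElem_mem _))]
    at hup hdown
  exact ⟨hup, hdown⟩

theorem alpha_tensor_bound_general (d : ℕ) (hd : 2 ≤ d) (γ γ' : List ℕ)
    (hpos : ∀ x ∈ γ, 0 < x) (hpos' : ∀ x ∈ γ', 0 < x) (hfl : γ'.head? = γ'.getLast?) :
    tilingAlpha (seqTiling d (tensorSeq γ γ')) ≤
      max (tilingAlpha (seqTiling d γ)) (tilingAlpha (seqTiling d γ')) := by
  have hposT : ∀ x ∈ tensorSeq γ γ', 0 < x := by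
    simp only [tensorSeq, List.mem_flatMap, List.mem_map]
    rintro _ ⟨g, hg, g', hg', rfl⟩
    exact Nat.mul_pos (hpos g hg) (hpos' g' hg')
  obtain ⟨hM, hγ⟩ := (tilingAlpha_seqTiling_le_iff hd hpos).1 (le_max_left _ _)
  obtain ⟨-, hγ'⟩ := (tilingAlpha_seqTiling_le_iff hd hpos').1 (le_max_right _ _)
  exact (tilingAlpha_seqTiling_le_iff hd hposT).2
    ⟨hM, isChain_tensorSeq (fun c _ _ h => h.mul_left c) hγ hγ' hfl⟩

/-- (Lemma 3.6). If `γ'_1 = γ'_{b'}`, then `α_{T^{(d)}_{γ⊗γ'}} ≤ max(α_{T^{(d)}_γ}, α_{T^{(d)}_{γ'}})`. -/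
theorem alpha_tensor_bound (d : ℕ) (hd : 2 ≤ d) (γ γ' : List ℕ) (hne : γ ≠ []) (hne' : γ' ≠ [])
    (hpos : ∀ x ∈ γ, 0 < x) (hpos' : ∀ x ∈ γ', 0 < x) (hfl : γ'.head? = γ'.getLast?) :
    tilingAlpha (seqTiling d (tensorSeq γ γ')) ≤
      max (tilingAlpha (seqTiling d γ)) (tilingAlpha (seqTiling d γ')) :=
  alpha_tensor_bound_general d hd γ γ' hpos hpos' hfl

end
end

section
/- Let d ≥ 2 and let γ = ⟨γ_1,…,γ_b⟩ be a sequence of positive integers. Then for every B ∈ Π_{d−1}(T_γ^{(d)}), the diameter in the graph G(T_γ^{(d)}) of the set of tiles Π_{d−1}^{-1}(B; T_γ^{(d)}) = {A ∈ T_γ^{(d)} : Π_{d−1}(A) = B} is at least 1/L_{T_γ^{(d)}} − 1. -/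
noncomputable section
open Classical

/-! Through `B` runs the row of `γ_i` tiles that differ from `B` only in their first
coordinate: they share the projection of `B`, consecutive ones are tangent, and together
they span `[0, 1]` along the first axis. A walk of length `n` in a tangency graph whose side
lengths are at most `L` advances at most `(n + 1) L` along any axis, so the two end tiles of
the row are at distance at least `1 / L - 1`. -/

theorem Tile.Tangent.max_lower_le_min_upper_s15 {d : ℕ} {A C : Tile d} (h : A.Tangent C)
    (i : Fin d) : max (A.lower i) (C.lower i) ≤ min (A.upper i) (C.upper i) := by
  obtain ⟨j, hj, hlt⟩ := h
  rcases eq_or_ne i j with rfl | hij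
  · exact hj.le
  · exact (hlt i hij).le

theorem Tile.Tangent.ne {d : ℕ} {A C : Tile d} (h : A.Tangent C)
    (hA : ∀ i, A.lower i < A.upper i) : A ≠ C := by
  rintro rfl
  obtain ⟨i, hi, -⟩ := h
  simp only [max_self, min_self] at hi
  exact (hA i).ne hi

theorem tangencyGraph_adj_lower_le_upper {d : ℕ} {T : Set (Tile d)} {A C : T}
    (h : (tangencyGraph T).Adj A C) (i : Fin d) : C.1.lower i ≤ A.1.upper i := by
  rcases h.2 with h | h
  · exact (le_max_right _ _).trans ((h.max_lower_le_min_upper_s15 i).trans (min_le_left _ _))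
  · exact (le_max_left _ _).trans ((h.max_lower_le_min_upper_s15 i).trans (min_le_right _ _))

theorem tangencyGraph_walk_upper_le {d : ℕ} {T : Set (Tile d)} {L : ℝ}
    (hL : ∀ A ∈ T, ∀ i, A.len i ≤ L) (i : Fin d) {x y : T}
    (p : (tangencyGraph T).Walk x y) :
    y.1.upper i ≤ x.1.lower i + (p.length + 1) * L := by
  induction p with
  | @nil u =>
    have := hL u.1 u.2 i
    simp only [Tile.len, SimpleGraph.Walk.length_nil, CharP.cast_eq_zero] at this ⊢
    linarith
  | @cons u z w h q ih =>
    have hu := hL u.1 u.2 i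
    have hz := tangencyGraph_adj_lower_le_upper h i
    simp only [Tile.len, SimpleGraph.Walk.length_cons, Nat.cast_add, Nat.cast_one] at hu ih ⊢
    linarith

theorem tangencyGraph_upper_sub_lower_le_dist {d : ℕ} {T : Set (Tile d)} {L : ℝ}
    (hL : ∀ A ∈ T, ∀ i, A.len i ≤ L) (i : Fin d) {x y : T}
    (h : (tangencyGraph T).Reachable x y) :
    y.1.upper i - x.1.lower i ≤ ((tangencyGraph T).dist x y + 1) * L := by
  obtain ⟨p, hp⟩ := h.exists_walk_length_eq_dist
  have := tangencyGraph_walk_upper_le hL i p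
  rw [hp] at this
  linarith

theorem Tile.len_le_tilingL {d : ℕ} {T : Set (Tile d)} (hT : T.Finite) {A : Tile d}
    (hA : A ∈ T) (i : Fin d) : A.len i ≤ tilingL T := by
  refine le_csSup (Set.Finite.bddAbove ?_) ⟨A, hA, i, rfl⟩
  refine (hT.biUnion fun A _ => Set.finite_range A.len).subset ?_
  rintro r ⟨A, hA, i, rfl⟩
  exact Set.mem_biUnion hA ⟨i, rfl⟩

theorem dist_le_graphSetDiam {V : Type*} [Finite V] (G : SimpleGraph V) {S : Set V}
    {x y : V} (hx : x ∈ S) (hy : y ∈ S) : (G.dist x y : ℝ) ≤ graphSetDiam G S := by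
  refine le_csSup ((Set.finite_range fun p : V × V => (G.dist p.1 p.2 : ℝ)).bddAbove.mono ?_)
    ⟨x, hx, y, hy, rfl⟩
  rintro r ⟨x, -, y, -, rfl⟩
  exact ⟨(x, y), rfl⟩

theorem seqTiling_finite (d : ℕ) (γ : List ℕ) : (seqTiling d γ).Finite := by
  refine (Set.finite_range fun p : (i : Fin γ.length) × (Fin d → Fin (γ.get i + 1)) =>
    seqTile d γ p.1 fun j => p.2 j).subset ?_
  rintro A ⟨i, v, hv, rfl⟩
  refine ⟨⟨i, fun j => ⟨v j, ?_⟩⟩, rfl⟩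
  by_cases hj : j.val < d - 1
  · exact Nat.lt_succ_of_lt ((hv j).1 hj)
  · simp [(hv j).2 hj]

section Row

variable {d : ℕ} {γ : List ℕ} {i : Fin γ.length} {v : Fin d → ℕ}

theorem seqTile_update_mem (hv : ∀ j : Fin d, (j.val < d - 1 → v j < γ.get i) ∧
      (¬ j.val < d - 1 → v j = 0)) {j : Fin d} (hj : j.val < d - 1) {k : ℕ}
    (hk : k < γ.get i) :
    seqTile d γ i (Function.update v j k) ∈ seqTiling d γ := by
  refine ⟨i, _, fun j' => ?_, rfl⟩
  rcases eq_or_ne j' j with rfl | hj'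
  · simpa [hj] using hk
  · simpa [Function.update_of_ne hj'] using hv j'

theorem seqTile_lower_lt_upper (hγ : 0 < γ.get i) (j : Fin d) :
    (seqTile d γ i v).lower j < (seqTile d γ i v).upper j := by
  have hg : (0 : ℝ) < γ.get i := by exact_mod_cast hγ
  have hb : (0 : ℝ) < γ.length := by exact_mod_cast i.pos
  simp only [seqTile]
  split_ifs
  · gcongr; linarith
  · gcongr; linarith

theorem seqTile_update_adj (hv : ∀ j : Fin d, (j.val < d - 1 → v j < γ.get i) ∧
      (¬ j.val < d - 1 → v j = 0)) {j : Fin d} (hj : j.val < d - 1) {k : ℕ}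
    (hk : k + 1 < γ.get i) :
    (tangencyGraph (seqTiling d γ)).Adj ⟨_, seqTile_update_mem hv hj (k.lt_succ_self.trans hk)⟩
      ⟨_, seqTile_update_mem hv hj hk⟩ := by
  have hγ : 0 < γ.get i := k.succ_pos.trans hk
  have hg : (0 : ℝ) < γ.get i := by exact_mod_cast hγ
  have htangent : (seqTile d γ i (Function.update v j k)).Tangent
      (seqTile d γ i (Function.update v j (k + 1))) := by
    refine ⟨j, ?_, fun j' hj' => ?_⟩
    · simp only [seqTile, hj, if_true, Function.update_self, Nat.cast_add, Nat.cast_one]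
      rw [max_eq_right (by gcongr; linarith), min_eq_left (by gcongr; linarith)]
    · have := seqTile_lower_lt_upper (v := Function.update v j k) hγ j'
      simp only [seqTile, Function.update_of_ne hj', max_self, min_self] at this ⊢
      exact this
  exact ⟨fun h => htangent.ne (seqTile_lower_lt_upper hγ) (congrArg Subtype.val h),
    Or.inl htangent⟩

theorem seqTile_update_reachable (hv : ∀ j : Fin d, (j.val < d - 1 → v j < γ.get i) ∧
      (¬ j.val < d - 1 → v j = 0)) {j : Fin d} (hj : j.val < d - 1) {k : ℕ}
    (hk : k < γ.get i) :
    (tangencyGraph (seqTiling d γ)).Reachable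
      ⟨_, seqTile_update_mem hv hj ((Nat.zero_le k).trans_lt hk)⟩
      ⟨_, seqTile_update_mem hv hj hk⟩ := by
  induction k with
  | zero => rfl
  | succ k ih =>
    exact (ih (k.lt_succ_self.trans hk)).trans (seqTile_update_adj hv hj hk).reachable

theorem projTile_seqTile_update_zero (hd : 0 < d) (k : ℕ) :
    projTile (seqTile d γ i (Function.update v ⟨0, hd⟩ k)) = projTile (seqTile d γ i v) := by
  have hne : ∀ j : Fin (d - 1), (⟨j.val + 1, by omega⟩ : Fin d) ≠ ⟨0, hd⟩ := by
    simp [Fin.ext_iff]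
  simp only [projTile, seqTile, Function.update_of_ne (hne _)]

end Row

theorem inverse_fiber_diam_general (d : ℕ) (hd : 2 ≤ d) (γ : List ℕ) (B : (seqTiling d γ)) :
    1 / tilingL (seqTiling d γ) - 1 ≤
      graphSetDiam (tangencyGraph (seqTiling d γ))
        {A : (seqTiling d γ) | projTile A.1 = projTile B.1} := by
  obtain ⟨i, v, hv, hB⟩ := B.2
  have : Finite (seqTiling d γ) := (seqTiling_finite d γ).to_subtype
  have hj : (⟨0, by omega⟩ : Fin d).val < d - 1 := by dsimp; omega
  have hγ : 0 < γ.get i := (Nat.zero_le _).trans_lt ((hv _).1 hj)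
  have hk : γ.get i - 1 < γ.get i := Nat.sub_one_lt hγ.ne'
  have hreach := seqTile_update_reachable hv hj hk
  set G := tangencyGraph (seqTiling d γ)
  set n := G.dist ⟨_, seqTile_update_mem hv hj hγ⟩ ⟨_, seqTile_update_mem hv hj hk⟩
  have hspan : 1 ≤ (n + 1) * tilingL (seqTiling d γ) := by
    have := tangencyGraph_upper_sub_lower_le_dist
      (fun A hA => Tile.len_le_tilingL (seqTiling_finite d γ) hA) ⟨0, by omega⟩ hreach
    have hg : (γ.get i : ℝ) ≠ 0 := by exact_mod_cast hγ.ne'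
    simp only [seqTile, hj, if_true, Function.update_self, Nat.cast_pred hγ] at this
    rwa [sub_add_cancel, div_self hg, CharP.cast_eq_zero, zero_div, sub_zero] at this
  have hfiber (k : ℕ) : projTile (seqTile d γ i (Function.update v ⟨0, by omega⟩ k)) =
      projTile B.1 := hB ▸ projTile_seqTile_update_zero _ k
  have hdiam : (n : ℝ) ≤ graphSetDiam G {A | projTile A.1 = projTile B.1} :=
    dist_le_graphSetDiam G (hfiber 0) (hfiber _)
  have hL : 0 < tilingL (seqTiling d γ) := by nlinarith
  rw [div_sub_one hL.ne', div_le_iff₀ hL]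
  nlinarith

/-- (Lemma 4.3). For every `B ∈ Π_{d-1}(T_γ^{(d)})`, the fiber `Π_{d-1}^{-1}(B; T_γ^{(d)})` has
diameter at least `1/L_{T_γ^{(d)}} - 1` in `G(T_γ^{(d)})`. -/
theorem inverse_fiber_diam (d : ℕ) (hd : 2 ≤ d) (γ : List ℕ) (hne : γ ≠ [])
    (hpos : ∀ x ∈ γ, 0 < x) (B : (seqTiling d γ)) :
    1 / tilingL (seqTiling d γ) - 1 ≤
      graphSetDiam (tangencyGraph (seqTiling d γ))
        {A : (seqTiling d γ) | projTile A.1 = projTile B.1} :=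
  inverse_fiber_diam_general d hd γ B

end
end
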